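/- Let m be a positive integer. Then the function F : T³ → ℝ given by F(x₁,x₂,x₃) = cos(mx₁) + cos(mx₂) − (1/2)·cos(mx₃) has exactly two nodal domains. -/
import Mathlib


noncomputable section

/-- `cos (m x)` is `2π`-periodic. -/
lemma cos_mul_periodic (m : ℕ) :
    Function.Periodic (fun x : ℝ => Real.cos (m * x)) (2 * Real.pi) := by
  intro x
  have h : (m : ℝ) * (x + 2 * Real.pi) = m * x + (m : ℤ) * (2 * Real.pi) := by
    push_cast; ring
  simp only [h, Real.cos_add_int_mul_two_pi]

/-- `sin (m x)` is `2π`-periodic. -/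
lemma sin_mul_periodic (m : ℕ) :
    Function.Periodic (fun x : ℝ => Real.sin (m * x)) (2 * Real.pi) := by
  intro x
  have h : (m : ℝ) * (x + 2 * Real.pi) = m * x + (m : ℤ) * (2 * Real.pi) := by
    push_cast; ring
  simp only [h, Real.sin_add_int_mul_two_pi]

/-- The function `cos (m ·)` on the circle `ℝ/2πℤ`. -/
def cosT (m : ℕ) : AddCircle (2 * Real.pi) → ℝ := (cos_mul_periodic m).lift

/-- The function `sin (m ·)` on the circle `ℝ/2πℤ`. -/
def sinT (m : ℕ) : AddCircle (2 * Real.pi) → ℝ := (sin_mul_periodic m).lift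

/-- `f₁ = cos`, `f₀ = sin` (with frequency `m`) on the circle `ℝ/2πℤ`. -/
def fT (j : Fin 2) (m : ℕ) : AddCircle (2 * Real.pi) → ℝ :=
  if j = 1 then cosT m else sinT m

/-- The flat 3-torus `T³ = (ℝ/2πℤ)³`. -/
abbrev T3 := AddCircle (2 * Real.pi) × AddCircle (2 * Real.pi) × AddCircle (2 * Real.pi)

open Real Set

lemma exists_cos_min (u : ℝ) :
    ∃ v : ℝ, Real.cos v = -1 ∧ ∀ t ∈ Icc (0:ℝ) 1, Real.cos (u + t*(v-u)) ≤ Real.cos u := by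
  obtain ⟨k, w, hw0, hw2, rfl⟩ : ∃ (k : ℤ) (w : ℝ), 0 ≤ w ∧ w < 2*π ∧ u = w + k*(2*π) := by
    have h2pi : (0:ℝ) < 2*π := by positivity
    have h1 : (⌊u/(2*π)⌋:ℝ)*(2*π) ≤ u := (le_div_iff₀ h2pi).mp (Int.floor_le (u/(2*π)))
    have h2 : u < ((⌊u/(2*π)⌋:ℝ)+1)*(2*π) := by
      have := (div_lt_iff₀ h2pi).mp (Int.lt_floor_add_one (u/(2*π)))
      push_cast at this ⊢; linarith
    refine ⟨⌊u/(2*π)⌋, u - ⌊u/(2*π)⌋*(2*π), by linarith, by linarith, by ring⟩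
  refine ⟨π + k*(2*π), by simp [Real.cos_add_int_mul_two_pi], ?_⟩
  intro t ht
  have harg : (w + k*(2*π)) + t*((π + k*(2*π)) - (w + k*(2*π))) = (w + t*(π - w)) + k*(2*π) := by
    ring
  rw [harg, Real.cos_add_int_mul_two_pi, Real.cos_add_int_mul_two_pi]
  by_cases hwpi : w ≤ π
  · apply Real.cos_le_cos_of_nonneg_of_le_pi hw0
    · nlinarith [ht.1, ht.2, Real.pi_pos]
    · nlinarith [ht.1]
  · push_neg at hwpi
    rw [← Real.cos_two_pi_sub (w + t*(π - w)), ← Real.cos_two_pi_sub w]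
    apply Real.cos_le_cos_of_nonneg_of_le_pi
    · nlinarith [ht.2]
    · nlinarith [ht.1, ht.2]
    · nlinarith [ht.1, ht.2]

lemma exists_cos_max (u : ℝ) :
    ∃ v : ℝ, Real.cos v = 1 ∧ ∀ t ∈ Icc (0:ℝ) 1, Real.cos u ≤ Real.cos (u + t*(v-u)) := by
  obtain ⟨k, w, hw0, hw2, rfl⟩ : ∃ (k : ℤ) (w : ℝ), 0 ≤ w ∧ w < 2*π ∧ u = w + k*(2*π) := by
    have h2pi : (0:ℝ) < 2*π := by positivity
    have h1 : (⌊u/(2*π)⌋:ℝ)*(2*π) ≤ u := (le_div_iff₀ h2pi).mp (Int.floor_le (u/(2*π)))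
    have h2 : u < ((⌊u/(2*π)⌋:ℝ)+1)*(2*π) := by
      have := (div_lt_iff₀ h2pi).mp (Int.lt_floor_add_one (u/(2*π)))
      push_cast at this ⊢; linarith
    refine ⟨⌊u/(2*π)⌋, u - ⌊u/(2*π)⌋*(2*π), by linarith, by linarith, by ring⟩
  by_cases hwpi : w ≤ π
  · refine ⟨0 + k*(2*π), by simp [Real.cos_add_int_mul_two_pi], ?_⟩
    intro t ht
    have harg : (w + k*(2*π)) + t*((0 + k*(2*π)) - (w + k*(2*π))) = (w - t*w) + k*(2*π) := by
      ring
    rw [harg, Real.cos_add_int_mul_two_pi, Real.cos_add_int_mul_two_pi]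
    apply Real.cos_le_cos_of_nonneg_of_le_pi
    · nlinarith [ht.1, ht.2]
    · exact hwpi
    · nlinarith [ht.1]
  · push_neg at hwpi
    refine ⟨(2*π) + k*(2*π), by simp [Real.cos_add_int_mul_two_pi, Real.cos_two_pi], ?_⟩
    intro t ht
    have harg : (w + k*(2*π)) + t*(((2*π) + k*(2*π)) - (w + k*(2*π))) = (w + t*(2*π - w)) + k*(2*π) := by
      ring
    rw [harg, Real.cos_add_int_mul_two_pi, Real.cos_add_int_mul_two_pi]
    rw [← Real.cos_two_pi_sub (w + t*(2*π - w)), ← Real.cos_two_pi_sub w]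
    apply Real.cos_le_cos_of_nonneg_of_le_pi
    · nlinarith [ht.1, ht.2]
    · nlinarith
    · nlinarith [ht.1, ht.2]


lemma continuous_cosT (m : ℕ) : Continuous (cosT m) := by
  have h : Continuous (fun x : ℝ => Real.cos (m * x)) := by fun_prop
  exact h.quotient_liftOn' _

def Fm (m : ℕ) : T3 → ℝ := fun p => cosT m p.1 + cosT m p.2.1 - (1/2) * cosT m p.2.2

lemma continuous_Fm (m : ℕ) : Continuous (Fm m) := by
  have h := continuous_cosT m
  exact ((h.comp continuous_fst).add (h.comp (continuous_fst.comp continuous_snd))).sub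
    (continuous_const.mul (h.comp (continuous_snd.comp continuous_snd)))

def mk3 (r : ℝ × ℝ × ℝ) : T3 := (↑r.1, ↑r.2.1, ↑r.2.2)

lemma continuous_mk3 : Continuous mk3 := by
  exact ((AddCircle.continuous_mk' _).comp continuous_fst).prodMk
    (((AddCircle.continuous_mk' _).comp (continuous_fst.comp continuous_snd)).prodMk
      ((AddCircle.continuous_mk' _).comp (continuous_snd.comp continuous_snd)))

lemma Fm_mk3 (m : ℕ) (r : ℝ × ℝ × ℝ) :
    Fm m (mk3 r) = Real.cos (m*r.1) + Real.cos (m*r.2.1) - (1/2)*Real.cos (m*r.2.2) := rfl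

lemma joinedIn_seg (m : ℕ) (p q : ℝ × ℝ × ℝ)
    (h : ∀ t ∈ Icc (0:ℝ) 1,
      Real.cos (m*(p.1 + t*(q.1-p.1))) + Real.cos (m*(p.2.1 + t*(q.2.1-p.2.1)))
        - (1/2)*Real.cos (m*(p.2.2 + t*(q.2.2-p.2.2))) ≠ 0) :
    JoinedIn {p : T3 | Fm m p ≠ 0} (mk3 p) (mk3 q) := by
  refine ⟨⟨⟨fun t => mk3 (p.1 + (t:ℝ)*(q.1-p.1), p.2.1 + (t:ℝ)*(q.2.1-p.2.1),
      p.2.2 + (t:ℝ)*(q.2.2-p.2.2)), ?_⟩, ?_, ?_⟩, fun t => h t t.2⟩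
  · apply continuous_mk3.comp; fun_prop
  · simp [mk3]
  · simp [mk3]

lemma joined_pos (m : ℕ) (hm : 0 < m) (x y z : ℝ)
    (h : 0 < Real.cos (m*x) + Real.cos (m*y) - (1/2)*Real.cos (m*z)) :
    JoinedIn {p : T3 | Fm m p ≠ 0} (mk3 (x,y,z)) (mk3 (0,0,π/m)) := by
  have hm' : ((m:ℝ)) ≠ 0 := Nat.cast_ne_zero.mpr hm.ne'
  obtain ⟨v, hv, hvle⟩ := exists_cos_min ((m:ℝ)*z)
  set z₁ := v/(m:ℝ) with hz₁def
  have hz₁ : (m:ℝ)*z₁ = v := by rw [hz₁def]; field_simp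
  obtain ⟨w, hw, hwge⟩ := exists_cos_max ((m:ℝ)*x)
  set x₁ := w/(m:ℝ) with hx₁def
  have hx₁ : (m:ℝ)*x₁ = w := by rw [hx₁def]; field_simp
  have s1 : JoinedIn {p : T3 | Fm m p ≠ 0} (mk3 (x,y,z)) (mk3 (x,y,z₁)) := by
    apply joinedIn_seg
    intro t ht
    simp only
    have harg : (m:ℝ)*(z + t*(z₁-z)) = (m:ℝ)*z + t*(v - (m:ℝ)*z) := by
      rw [← hz₁]; ring
    rw [harg]
    have := hvle t ht
    have hx' : Real.cos ((m:ℝ)*(x + t*(x-x))) = Real.cos ((m:ℝ)*x) := by ring_nf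
    have hy' : Real.cos ((m:ℝ)*(y + t*(y-y))) = Real.cos ((m:ℝ)*y) := by ring_nf
    rw [hx', hy']
    nlinarith
  have s2 : JoinedIn {p : T3 | Fm m p ≠ 0} (mk3 (x,y,z₁)) (mk3 (x₁,y,z₁)) := by
    apply joinedIn_seg
    intro t ht
    simp only
    have harg : (m:ℝ)*(x + t*(x₁-x)) = (m:ℝ)*x + t*(w - (m:ℝ)*x) := by
      rw [← hx₁]; ring
    rw [harg]
    have := hwge t ht
    have hy' : Real.cos ((m:ℝ)*(y + t*(y-y))) = Real.cos ((m:ℝ)*y) := by ring_nf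
    have hz' : Real.cos ((m:ℝ)*(z₁ + t*(z₁-z₁))) = Real.cos ((m:ℝ)*z₁) := by ring_nf
    rw [hy', hz']
    have hz1 : Real.cos ((m:ℝ)*z₁) = -1 := by rw [hz₁, hv]
    rw [hz1]
    have hcz : Real.cos ((m:ℝ)*z) ≥ -1 := Real.neg_one_le_cos _
    nlinarith
  have s3 : JoinedIn {p : T3 | Fm m p ≠ 0} (mk3 (x₁,y,z₁)) (mk3 (x₁,0,z₁)) := by
    apply joinedIn_seg
    intro t ht
    simp only
    have hx' : Real.cos ((m:ℝ)*(x₁ + t*(x₁-x₁))) = Real.cos ((m:ℝ)*x₁) := by ring_nf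
    have hz' : Real.cos ((m:ℝ)*(z₁ + t*(z₁-z₁))) = Real.cos ((m:ℝ)*z₁) := by ring_nf
    rw [hx', hz']
    have hz1 : Real.cos ((m:ℝ)*z₁) = -1 := by rw [hz₁, hv]
    have hx1 : Real.cos ((m:ℝ)*x₁) = 1 := by rw [hx₁, hw]
    rw [hz1, hx1]
    have := Real.neg_one_le_cos ((m:ℝ)*(y + t*(0-y)))
    nlinarith
  have s4 : JoinedIn {p : T3 | Fm m p ≠ 0} (mk3 (x₁,0,z₁)) (mk3 (0,0,z₁)) := by
    apply joinedIn_seg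
    intro t ht
    simp only
    have hy' : Real.cos ((m:ℝ)*((0:ℝ) + t*(0-0))) = 1 := by norm_num
    have hz' : Real.cos ((m:ℝ)*(z₁ + t*(z₁-z₁))) = Real.cos ((m:ℝ)*z₁) := by ring_nf
    rw [hy', hz']
    have hz1 : Real.cos ((m:ℝ)*z₁) = -1 := by rw [hz₁, hv]
    rw [hz1]
    have := Real.neg_one_le_cos ((m:ℝ)*(x₁ + t*(0-x₁)))
    nlinarith
  have s5 : JoinedIn {p : T3 | Fm m p ≠ 0} (mk3 (0,0,z₁)) (mk3 (0,0,π/m)) := by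
    apply joinedIn_seg
    intro t ht
    simp only
    have hx' : Real.cos ((m:ℝ)*((0:ℝ) + t*(0-0))) = 1 := by norm_num
    rw [hx']
    have := Real.cos_le_one ((m:ℝ)*(z₁ + t*(π/m - z₁)))
    nlinarith
  exact (((s1.trans s2).trans s3).trans s4).trans s5

lemma joined_neg (m : ℕ) (hm : 0 < m) (x y z : ℝ)
    (h : Real.cos (m*x) + Real.cos (m*y) - (1/2)*Real.cos (m*z) < 0) :
    JoinedIn {p : T3 | Fm m p ≠ 0} (mk3 (x,y,z)) (mk3 (π/m,π/m,0)) := by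
  have hm' : ((m:ℝ)) ≠ 0 := Nat.cast_ne_zero.mpr hm.ne'
  have hπ : (m:ℝ)*(π/m) = π := mul_div_cancel₀ _ hm'
  obtain ⟨v, hv, hvge⟩ := exists_cos_max ((m:ℝ)*z)
  set z₁ := v/(m:ℝ) with hz₁def
  have hz₁ : (m:ℝ)*z₁ = v := by rw [hz₁def]; field_simp
  obtain ⟨w, hw, hwle⟩ := exists_cos_min ((m:ℝ)*x)
  set x₁ := w/(m:ℝ) with hx₁def
  have hx₁ : (m:ℝ)*x₁ = w := by rw [hx₁def]; field_simp
  have s1 : JoinedIn {p : T3 | Fm m p ≠ 0} (mk3 (x,y,z)) (mk3 (x,y,z₁)) := by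
    apply joinedIn_seg
    intro t ht
    simp only
    have harg : (m:ℝ)*(z + t*(z₁-z)) = (m:ℝ)*z + t*(v - (m:ℝ)*z) := by rw [← hz₁]; ring
    rw [harg]
    have := hvge t ht
    have hx' : Real.cos ((m:ℝ)*(x + t*(x-x))) = Real.cos ((m:ℝ)*x) := by ring_nf
    have hy' : Real.cos ((m:ℝ)*(y + t*(y-y))) = Real.cos ((m:ℝ)*y) := by ring_nf
    rw [hx', hy']
    nlinarith
  have s2 : JoinedIn {p : T3 | Fm m p ≠ 0} (mk3 (x,y,z₁)) (mk3 (x₁,y,z₁)) := by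
    apply joinedIn_seg
    intro t ht
    simp only
    have harg : (m:ℝ)*(x + t*(x₁-x)) = (m:ℝ)*x + t*(w - (m:ℝ)*x) := by rw [← hx₁]; ring
    rw [harg]
    have := hwle t ht
    have hy' : Real.cos ((m:ℝ)*(y + t*(y-y))) = Real.cos ((m:ℝ)*y) := by ring_nf
    have hz' : Real.cos ((m:ℝ)*(z₁ + t*(z₁-z₁))) = Real.cos ((m:ℝ)*z₁) := by ring_nf
    rw [hy', hz']
    have hz1 : Real.cos ((m:ℝ)*z₁) = 1 := by rw [hz₁, hv]
    rw [hz1]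
    have hcz : Real.cos ((m:ℝ)*z) ≤ 1 := Real.cos_le_one _
    nlinarith
  have s3 : JoinedIn {p : T3 | Fm m p ≠ 0} (mk3 (x₁,y,z₁)) (mk3 (x₁,π/m,z₁)) := by
    apply joinedIn_seg
    intro t ht
    simp only
    have hx' : Real.cos ((m:ℝ)*(x₁ + t*(x₁-x₁))) = Real.cos ((m:ℝ)*x₁) := by ring_nf
    have hz' : Real.cos ((m:ℝ)*(z₁ + t*(z₁-z₁))) = Real.cos ((m:ℝ)*z₁) := by ring_nf
    rw [hx', hz']
    have hz1 : Real.cos ((m:ℝ)*z₁) = 1 := by rw [hz₁, hv]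
    have hx1 : Real.cos ((m:ℝ)*x₁) = -1 := by rw [hx₁, hw]
    rw [hz1, hx1]
    have := Real.cos_le_one ((m:ℝ)*(y + t*(π/m-y)))
    nlinarith
  have s4 : JoinedIn {p : T3 | Fm m p ≠ 0} (mk3 (x₁,π/m,z₁)) (mk3 (π/m,π/m,z₁)) := by
    apply joinedIn_seg
    intro t ht
    simp only
    have hy' : Real.cos ((m:ℝ)*(π/m + t*(π/m-π/m))) = -1 := by
      have h0 : π/(m:ℝ) + t*(π/m-π/m) = π/m := by ring
      rw [h0, hπ, Real.cos_pi]
    have hz' : Real.cos ((m:ℝ)*(z₁ + t*(z₁-z₁))) = Real.cos ((m:ℝ)*z₁) := by ring_nf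
    rw [hy', hz']
    have hz1 : Real.cos ((m:ℝ)*z₁) = 1 := by rw [hz₁, hv]
    rw [hz1]
    have := Real.cos_le_one ((m:ℝ)*(x₁ + t*(π/m-x₁)))
    nlinarith
  have s5 : JoinedIn {p : T3 | Fm m p ≠ 0} (mk3 (π/m,π/m,z₁)) (mk3 (π/m,π/m,0)) := by
    apply joinedIn_seg
    intro t ht
    simp only
    have hx' : Real.cos ((m:ℝ)*(π/m + t*(π/m-π/m))) = -1 := by
      have h0 : π/(m:ℝ) + t*(π/m-π/m) = π/m := by ring
      rw [h0, hπ, Real.cos_pi]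
    rw [hx']
    have := Real.neg_one_le_cos ((m:ℝ)*(z₁ + t*(0-z₁)))
    nlinarith
  exact (((s1.trans s2).trans s3).trans s4).trans s5

/-- (Lemma for Case 4 of the paper's eigenbasis of the flat 3-torus.)  For a positive
integer `m`, the function `F(x₁,x₂,x₃) = cos(mx₁) + cos(mx₂) - (1/2) cos(mx₃)` on `T³`
has exactly two nodal domains. -/
theorem stmt11 (m : ℕ) (hm : 0 < m) :
    Nat.card (ConnectedComponents
      {p : T3 // cosT m p.1 + cosT m p.2.1 - (1 / 2) * cosT m p.2.2 ≠ 0}) = 2 := by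
  have hm' : ((m:ℝ)) ≠ 0 := Nat.cast_ne_zero.mpr hm.ne'
  have hπ : (m:ℝ)*(π/m) = π := mul_div_cancel₀ _ hm'
  have hFA : Fm m (mk3 (0,0,π/m)) = 5/2 := by
    show Real.cos ((m:ℝ)*0) + Real.cos ((m:ℝ)*0) - (1/2)*Real.cos ((m:ℝ)*(π/m)) = 5/2
    rw [hπ]; norm_num [Real.cos_pi]
  have hFB : Fm m (mk3 (π/m,π/m,0)) = -(5/2) := by
    show Real.cos ((m:ℝ)*(π/m)) + Real.cos ((m:ℝ)*(π/m)) - (1/2)*Real.cos ((m:ℝ)*0) = -(5/2)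
    rw [hπ]; norm_num [Real.cos_pi]
  have hA : Fm m (mk3 (0,0,π/m)) ≠ 0 := by rw [hFA]; norm_num
  have hB : Fm m (mk3 (π/m,π/m,0)) ≠ 0 := by rw [hFB]; norm_num
  set X := {p : T3 // cosT m p.1 + cosT m p.2.1 - (1 / 2) * cosT m p.2.2 ≠ 0} with hX
  have hcont : Continuous (fun q : X => Fm m q.1) :=
    (continuous_Fm m).comp continuous_subtype_val
  set A : X := ⟨mk3 (0,0,π/m), hA⟩ with hAdef
  set B : X := ⟨mk3 (π/m,π/m,0), hB⟩ with hBdef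
  rw [Nat.card_eq_two_iff]
  refine ⟨ConnectedComponents.mk A, ConnectedComponents.mk B, ?_, ?_⟩
  · intro hne
    have hcc : connectedComponent A = connectedComponent B :=
      ConnectedComponents.coe_eq_coe.mp hne
    have hBA : B ∈ connectedComponent A := hcc ▸ mem_connectedComponent
    have him := (isPreconnected_connectedComponent (x := A)).intermediate_value hBA
      mem_connectedComponent hcont.continuousOn
    have h0 : (0:ℝ) ∈ Icc (Fm m B.1) (Fm m A.1) := by
      show (0:ℝ) ∈ Icc (Fm m (mk3 (π/m,π/m,0))) (Fm m (mk3 (0,0,π/m)))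
      rw [hFA, hFB]; constructor <;> norm_num
    obtain ⟨c, _, hc0⟩ := him h0
    exact c.2 hc0
  · rw [Set.eq_univ_iff_forall]
    intro q
    obtain ⟨p, rfl⟩ := ConnectedComponents.surjective_coe q
    obtain ⟨⟨p1, p2, p3⟩, hne⟩ := p
    obtain ⟨x, rfl⟩ := QuotientAddGroup.mk_surjective p1
    obtain ⟨y, rfl⟩ := QuotientAddGroup.mk_surjective p2
    obtain ⟨z, rfl⟩ := QuotientAddGroup.mk_surjective p3
    have hne' : Fm m (mk3 (x,y,z)) ≠ 0 := hne
    rcases hne'.lt_or_gt with hlt | hgt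
    · have hJ := joined_neg m hm x y z hlt
      have hJ2 : Joined (⟨mk3 (x,y,z), hne'⟩ : X) B := hJ.joined_subtype
      have hcc : connectedComponent (⟨mk3 (x,y,z), hne'⟩ : X) = connectedComponent B :=
        connectedComponent_eq (pathComponent_subset_component (⟨mk3 (x,y,z), hne'⟩ : X) hJ2)
      right
      exact ConnectedComponents.coe_eq_coe.mpr hcc
    · have hJ := joined_pos m hm x y z hgt
      have hJ2 : Joined (⟨mk3 (x,y,z), hne'⟩ : X) A := hJ.joined_subtype
      have hcc : connectedComponent (⟨mk3 (x,y,z), hne'⟩ : X) = connectedComponent A :=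
        connectedComponent_eq (pathComponent_subset_component (⟨mk3 (x,y,z), hne'⟩ : X) hJ2)
      left
      exact ConnectedComponents.coe_eq_coe.mpr hcc
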